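/- arXiv:1302.5395 — 2 statements merged into one kernel-verified Lean document; each statement's English description precedes it below -/
import Mathlib

section
/- Let f : U → ℝ³ be a smooth immersion with a smooth adapted orthonormal frame field {e₁, e₂, e₃} along f, where e₁(p), e₂(p) span the tangent plane of f at p and e₃ = N is the unit normal. Let b₁, b₂, b₃ be real constants and (a_{ij}) a constant 3×3 orthogonal matrix. Define f* = f + b₁e₁ + b₂e₂ + b₃e₃ and e*₃ = a₃₁e₁ + a₃₂e₂ + a₃₃e₃, and set p₁ = a₃₁, p₂ = a₃₂, p₁₂ = b₁a₃₂ − b₂a₃₁, p₁₃ = b₁a₃₃ − b₃a₃₁, p₂₃ = b₂a₃₃ − b₃a₃₂. Assume p₁₂ ≠ 0 and that e*₃ is orthogonal to ∂_u f* and ∂_v f* at every point (i.e. e*₃ is a unit normal of the surface f*). Then the Gaussian curvature K and mean curvature H of f satisfy the linear Weingarten relation (p₁₂² + p₁₃² + p₂₃²)·K + 2(p₁p₁₃ + p₂p₂₃)·H + (p₁² + p₂²) = 0 at every point of U. (Necessity part of Propositions 5.1–5.2.) -/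
noncomputable section

open Real

/-- Vectors in `ℝ³`. -/
abbrev V3 : Type := Fin 3 → ℝ

/-- Euclidean dot product on `ℝ³`. -/
def dot3 (u v : V3) : ℝ := u 0 * v 0 + u 1 * v 1 + u 2 * v 2

/-- Euclidean norm on `ℝ³`. -/
def norm3 (u : V3) : ℝ := Real.sqrt (dot3 u u)

/-- Cross product on `ℝ³`. -/
def cross3 (u v : V3) : V3 :=
  ![u 1 * v 2 - u 2 * v 1, u 2 * v 0 - u 0 * v 2, u 0 * v 1 - u 1 * v 0]

/-- Partial derivative in the first (`u`) coordinate direction. -/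
def Du (f : ℝ × ℝ → V3) (p : ℝ × ℝ) : V3 := fderiv ℝ f p (1, 0)

/-- Partial derivative in the second (`v`) coordinate direction. -/
def Dv (f : ℝ × ℝ → V3) (p : ℝ × ℝ) : V3 := fderiv ℝ f p (0, 1)

/-- First fundamental form coefficient `E = f_u · f_u`. -/
def Ecoef (f : ℝ × ℝ → V3) (p : ℝ × ℝ) : ℝ := dot3 (Du f p) (Du f p)

/-- First fundamental form coefficient `F = f_u · f_v`. -/
def Fcoef (f : ℝ × ℝ → V3) (p : ℝ × ℝ) : ℝ := dot3 (Du f p) (Dv f p)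

/-- First fundamental form coefficient `G = f_v · f_v`. -/
def Gcoef (f : ℝ × ℝ → V3) (p : ℝ × ℝ) : ℝ := dot3 (Dv f p) (Dv f p)

/-- Unit normal `N = (f_u × f_v)/‖f_u × f_v‖`. -/
def normalVec (f : ℝ × ℝ → V3) (p : ℝ × ℝ) : V3 :=
  (norm3 (cross3 (Du f p) (Dv f p)))⁻¹ • cross3 (Du f p) (Dv f p)

/-- Second fundamental form coefficient `l = f_uu · N`. -/
def lcoef (f : ℝ × ℝ → V3) (p : ℝ × ℝ) : ℝ := dot3 (Du (Du f) p) (normalVec f p)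

/-- Second fundamental form coefficient `m = f_uv · N`. -/
def mcoef (f : ℝ × ℝ → V3) (p : ℝ × ℝ) : ℝ := dot3 (Dv (Du f) p) (normalVec f p)

/-- Second fundamental form coefficient `n = f_vv · N`. -/
def ncoef (f : ℝ × ℝ → V3) (p : ℝ × ℝ) : ℝ := dot3 (Dv (Dv f) p) (normalVec f p)

/-- Gaussian curvature `K = (l n − m²)/(E G − F²)`. -/
def GaussK (f : ℝ × ℝ → V3) (p : ℝ × ℝ) : ℝ :=
  (lcoef f p * ncoef f p - (mcoef f p) ^ 2) /
    (Ecoef f p * Gcoef f p - (Fcoef f p) ^ 2)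

/-- Mean curvature `H = (E n − 2 F m + G l)/(2(E G − F²))`. -/
def MeanH (f : ℝ × ℝ → V3) (p : ℝ × ℝ) : ℝ :=
  (Ecoef f p * ncoef f p - 2 * Fcoef f p * mcoef f p + Gcoef f p * lcoef f p) /
    (2 * (Ecoef f p * Gcoef f p - (Fcoef f p) ^ 2))

/-- `f` is an immersion on `U`: the partial derivatives are linearly independent,
equivalently their cross product is nonzero. -/
def Immersed (f : ℝ × ℝ → V3) (U : Set (ℝ × ℝ)) : Prop :=
  ∀ p ∈ U, cross3 (Du f p) (Dv f p) ≠ 0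



lemma dot3_add_left (u v w : V3) : dot3 (u + v) w = dot3 u w + dot3 v w := by
  simp only [dot3, Pi.add_apply]; ring

lemma dot3_add_right (u v w : V3) : dot3 u (v + w) = dot3 u v + dot3 u w := by
  simp only [dot3, Pi.add_apply]; ring

lemma dot3_smul_left (r : ℝ) (u w : V3) : dot3 (r • u) w = r * dot3 u w := by
  simp only [dot3, Pi.smul_apply, smul_eq_mul]; ring

lemma dot3_smul_right (r : ℝ) (u w : V3) : dot3 u (r • w) = r * dot3 u w := by
  simp only [dot3, Pi.smul_apply, smul_eq_mul]; ring

lemma cross3_apply0 (u v : V3) : cross3 u v 0 = u 1 * v 2 - u 2 * v 1 := rfl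
lemma cross3_apply1 (u v : V3) : cross3 u v 1 = u 2 * v 0 - u 0 * v 2 := rfl
lemma cross3_apply2 (u v : V3) : cross3 u v 2 = u 0 * v 1 - u 1 * v 0 := rfl

lemma dot3_cross_self_left (u v : V3) : dot3 u (cross3 u v) = 0 := by
  simp only [dot3, cross3_apply0, cross3_apply1, cross3_apply2]; ring

lemma dot3_cross_self_right (u v : V3) : dot3 v (cross3 u v) = 0 := by
  simp only [dot3, cross3_apply0, cross3_apply1, cross3_apply2]; ring

lemma lagrange3 (u v : V3) :
    dot3 (cross3 u v) (cross3 u v) = dot3 u u * dot3 v v - (dot3 u v) ^ 2 := by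
  simp only [dot3, cross3_apply0, cross3_apply1, cross3_apply2]; ring

lemma dot3_self_eq_zero {u : V3} (h : dot3 u u = 0) : u = 0 := by
  simp only [dot3] at h
  have h0 : u 0 = 0 := by nlinarith [sq_nonneg (u 0), sq_nonneg (u 1), sq_nonneg (u 2)]
  have h1 : u 1 = 0 := by nlinarith [sq_nonneg (u 0), sq_nonneg (u 1), sq_nonneg (u 2)]
  have h2 : u 2 = 0 := by nlinarith [sq_nonneg (u 0), sq_nonneg (u 1), sq_nonneg (u 2)]
  funext i
  fin_cases i <;> simp [h0, h1, h2]

lemma dot3_normalVec_Du (f : ℝ × ℝ → V3) (q : ℝ × ℝ) :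
    dot3 (Du f q) (normalVec f q) = 0 := by
  unfold normalVec
  rw [dot3_smul_right, dot3_cross_self_left, mul_zero]

lemma dot3_normalVec_Dv (f : ℝ × ℝ → V3) (q : ℝ × ℝ) :
    dot3 (Dv f q) (normalVec f q) = 0 := by
  unfold normalVec
  rw [dot3_smul_right, dot3_cross_self_right, mul_zero]



lemma dot3_comm (u v : V3) : dot3 u v = dot3 v u := by simp [dot3]; ring

lemma hasFDerivAt_dot3 {g h : ℝ × ℝ → V3} {g' h' : (ℝ × ℝ) →L[ℝ] V3} {p : ℝ × ℝ}
    (hg : HasFDerivAt g g' p) (hh : HasFDerivAt h h' p) :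
    HasFDerivAt (fun q => dot3 (g q) (h q))
      (((g p 0 • (ContinuousLinearMap.proj 0 : V3 →L[ℝ] ℝ).comp h' +
         h p 0 • (ContinuousLinearMap.proj 0 : V3 →L[ℝ] ℝ).comp g') +
        (g p 1 • (ContinuousLinearMap.proj 1 : V3 →L[ℝ] ℝ).comp h' +
         h p 1 • (ContinuousLinearMap.proj 1 : V3 →L[ℝ] ℝ).comp g')) +
       (g p 2 • (ContinuousLinearMap.proj 2 : V3 →L[ℝ] ℝ).comp h' +
        h p 2 • (ContinuousLinearMap.proj 2 : V3 →L[ℝ] ℝ).comp g')) p := by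
  have hgi : ∀ i : Fin 3, HasFDerivAt (fun q => g q i)
      ((ContinuousLinearMap.proj i : V3 →L[ℝ] ℝ).comp g') p :=
    fun i => by exact (ContinuousLinearMap.proj i).hasFDerivAt.comp p hg
  have hhi : ∀ i : Fin 3, HasFDerivAt (fun q => h q i)
      ((ContinuousLinearMap.proj i : V3 →L[ℝ] ℝ).comp h') p :=
    fun i => by exact (ContinuousLinearMap.proj i).hasFDerivAt.comp p hh
  exact (((hgi 0).mul (hhi 0)).add ((hgi 1).mul (hhi 1))).add ((hgi 2).mul (hhi 2))

/-- If `dot3 (g q) (h q)` is constant on an open set, the Leibniz expression vanishes. -/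
lemma dot3_const_deriv {g h : ℝ × ℝ → V3} {g' h' : (ℝ × ℝ) →L[ℝ] V3}
    {U : Set (ℝ × ℝ)} (hU : IsOpen U) {p : ℝ × ℝ} (hp : p ∈ U)
    (hg : HasFDerivAt g g' p) (hh : HasFDerivAt h h' p) {c : ℝ}
    (hz : ∀ q ∈ U, dot3 (g q) (h q) = c) (w : ℝ × ℝ) :
    dot3 (g' w) (h p) + dot3 (g p) (h' w) = 0 := by
  have H := hasFDerivAt_dot3 hg hh
  have h0 : fderiv ℝ (fun q => dot3 (g q) (h q)) p = 0 := by
    have heq : (fun q => dot3 (g q) (h q)) =ᶠ[nhds p] (fun _ => c) :=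
      Filter.eventuallyEq_of_mem (hU.mem_nhds hp) hz
    rw [heq.fderiv_eq]
    exact fderiv_const_apply c
  have h1 := H.fderiv
  rw [h0] at h1
  have h2 := congrFun (congrArg (fun (L : (ℝ × ℝ) →L[ℝ] ℝ) => (L : (ℝ × ℝ) → ℝ)) h1.symm) w
  simp only [ContinuousLinearMap.add_apply, ContinuousLinearMap.smul_apply,
    ContinuousLinearMap.comp_apply, ContinuousLinearMap.proj_apply,
    ContinuousLinearMap.zero_apply, smul_eq_mul] at h2
  simp only [dot3]
  linarith [h2]

lemma hasFDerivAt_Du {g : ℝ × ℝ → V3} {p : ℝ × ℝ} (hg : ContDiffAt ℝ (⊤ : ℕ∞) g p) :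
    HasFDerivAt (Du g)
      ((ContinuousLinearMap.apply ℝ V3 ((1:ℝ), (0:ℝ))).comp (fderiv ℝ (fderiv ℝ g) p)) p := by
  have h2 : ContDiffAt ℝ (⊤ : ℕ∞) (fderiv ℝ g) p := hg.fderiv_right (by simp)
  have h3 : DifferentiableAt ℝ (fderiv ℝ g) p := h2.differentiableAt (by simp)
  have := ((ContinuousLinearMap.apply ℝ V3 ((1:ℝ), (0:ℝ))).hasFDerivAt).comp p h3.hasFDerivAt
  simpa [Function.comp, Du] using this

lemma hasFDerivAt_Dv {g : ℝ × ℝ → V3} {p : ℝ × ℝ} (hg : ContDiffAt ℝ (⊤ : ℕ∞) g p) :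
    HasFDerivAt (Dv g)
      ((ContinuousLinearMap.apply ℝ V3 ((0:ℝ), (1:ℝ))).comp (fderiv ℝ (fderiv ℝ g) p)) p := by
  have h2 : ContDiffAt ℝ (⊤ : ℕ∞) (fderiv ℝ g) p := hg.fderiv_right (by simp)
  have h3 : DifferentiableAt ℝ (fderiv ℝ g) p := h2.differentiableAt (by simp)
  have := ((ContinuousLinearMap.apply ℝ V3 ((0:ℝ), (1:ℝ))).hasFDerivAt).comp p h3.hasFDerivAt
  simpa [Function.comp, Dv] using this

lemma schwarz {g : ℝ × ℝ → V3} {p : ℝ × ℝ} (hg : ContDiffAt ℝ (⊤ : ℕ∞) g p) :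
    Dv (Du g) p = Du (Dv g) p := by
  have hsym : IsSymmSndFDerivAt ℝ g p := hg.isSymmSndFDerivAt (by rw [minSmoothness_of_isRCLikeNormedField]; exact WithTop.coe_le_coe.mpr (le_top : (2:ℕ∞) ≤ ⊤))
  have h1 := (hasFDerivAt_Du hg).fderiv
  have h2 := (hasFDerivAt_Dv hg).fderiv
  show fderiv ℝ (Du g) p (0, 1) = fderiv ℝ (Dv g) p (1, 0)
  rw [h1, h2]
  simpa using hsym (0,1) (1,0)

/-- Orthonormal triples give a Parseval/Gram identity for `dot3`. -/
lemma gram3 {E1 E2 E3 : V3}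
    (h1 : dot3 E1 E1 = 1) (h2 : dot3 E2 E2 = 1) (h3 : dot3 E3 E3 = 1)
    (h4 : dot3 E1 E2 = 0) (h5 : dot3 E1 E3 = 0) (h6 : dot3 E2 E3 = 0)
    (X Y : V3) :
    dot3 X Y = dot3 X E1 * dot3 Y E1 + dot3 X E2 * dot3 Y E2 + dot3 X E3 * dot3 Y E3 := by
  set M : Matrix (Fin 3) (Fin 3) ℝ := Matrix.of ![E1, E2, E3] with hM
  have hMMt : M * M.transpose = 1 := by
    ext i j
    fin_cases i <;> fin_cases j <;>
      simp [hM, Matrix.mul_apply, Matrix.transpose_apply, Fin.sum_univ_three,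
        Matrix.one_apply, Matrix.vecHead, Matrix.vecTail, Function.comp] <;>
      simp only [dot3] at h1 h2 h3 h4 h5 h6 <;> linarith
  have hMtM : M.transpose * M = 1 := mul_eq_one_comm.mp hMMt
  have key : ∀ k l : Fin 3, E1 k * E1 l + E2 k * E2 l + E3 k * E3 l
      = if k = l then 1 else 0 := by
    intro k l
    have := congrFun (congrFun (congrArg (fun (A : Matrix (Fin 3) (Fin 3) ℝ) =>
      (A : Fin 3 → Fin 3 → ℝ)) hMtM) k) l
    simpa [hM, Matrix.mul_apply, Matrix.transpose_apply, Fin.sum_univ_three,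
      Matrix.one_apply] using this
  have k00 := key 0 0; have k01 := key 0 1; have k02 := key 0 2
  have k10 := key 1 0; have k11 := key 1 1; have k12 := key 1 2
  have k20 := key 2 0; have k21 := key 2 1; have k22 := key 2 2
  simp only [Fin.isValue, if_true, if_false, show ((0:Fin 3) = 1) = False by simp,
    show ((0:Fin 3) = 2) = False by simp, show ((1:Fin 3) = 0) = False by simp,
    show ((1:Fin 3) = 2) = False by simp, show ((2:Fin 3) = 0) = False by simp,
    show ((2:Fin 3) = 1) = False by simp, reduceIte] at k00 k01 k02 k10 k11 k12 k20 k21 k22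
  simp only [dot3]
  linear_combination (-(X 0 * Y 0)) * k00 + (-(X 0 * Y 1)) * k01 + (-(X 0 * Y 2)) * k02 +
    (-(X 1 * Y 0)) * k10 + (-(X 1 * Y 1)) * k11 + (-(X 1 * Y 2)) * k12 +
    (-(X 2 * Y 0)) * k20 + (-(X 2 * Y 1)) * k21 + (-(X 2 * Y 2)) * k22

lemma keyalg (a1 a2 a3 b1 b2 b3 t1u t2u t1v t2v w12u w12v w13u w23u w13v w23v
    h11 h12 h22 p12 p13 p23 : ℝ)
    (hp12 : p12 = b1 * a2 - b2 * a1) (hp13 : p13 = b1 * a3 - b3 * a1)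
    (hp23 : p23 = b2 * a3 - b3 * a2)
    (hDd : t1u * t2v - t2u * t1v ≠ 0)
    (hr1 : w13u = h11 * t1u + h12 * t2u) (hr2 : w13v = h11 * t1v + h12 * t2v)
    (hr3 : w23u = h12 * t1u + h22 * t2u) (hr4 : w23v = h12 * t1v + h22 * t2v)
    (hU : a1 * t1u + a2 * t2u + p12 * w12u + p13 * w13u + p23 * w23u = 0)
    (hV : a1 * t1v + a2 * t2v + p12 * w12v + p13 * w13v + p23 * w23v = 0)
    (hD : (-(a2 * w12v) - a3 * w13v) * (t1u - b2 * w12u - b3 * w13u)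
        + (a1 * w12v - a3 * w23v) * (t2u + b1 * w12u - b3 * w23u)
        + (a1 * w13v + a2 * w23v) * (b1 * w13u + b2 * w23u)
        = (-(a2 * w12u) - a3 * w13u) * (t1v - b2 * w12v - b3 * w13v)
        + (a1 * w12u - a3 * w23u) * (t2v + b1 * w12v - b3 * w23v)
        + (a1 * w13u + a2 * w23u) * (b1 * w13v + b2 * w23v)) :
    (p12 ^ 2 + p13 ^ 2 + p23 ^ 2) * (h11 * h22 - h12 ^ 2)
      + (a1 * p13 + a2 * p23) * (h11 + h22) + (a1 ^ 2 + a2 ^ 2) = 0 := by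
  subst hr1 hr2 hr3 hr4 hp12 hp13 hp23
  have key : (t1u * t2v - t2u * t1v) *
      (((b1 * a2 - b2 * a1) ^ 2 + (b1 * a3 - b3 * a1) ^ 2 + (b2 * a3 - b3 * a2) ^ 2) *
        (h11 * h22 - h12 ^ 2)
      + (a1 * (b1 * a3 - b3 * a1) + a2 * (b2 * a3 - b3 * a2)) * (h11 + h22)
      + (a1 ^ 2 + a2 ^ 2)) = 0 := by
    linear_combination (b1 * a2 - b2 * a1) * hD
      + (a1 * t2v - a2 * t1v - (b2 * a3 - b3 * a2) * (h11 * t1v + h12 * t2v)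
          + (b1 * a3 - b3 * a1) * (h12 * t1v + h22 * t2v)) * hU
      + (-(a1 * t2u - a2 * t1u - (b2 * a3 - b3 * a2) * (h11 * t1u + h12 * t2u)
          + (b1 * a3 - b3 * a1) * (h12 * t1u + h22 * t2u))) * hV
  rcases mul_eq_zero.mp key with h | h
  · exact absurd h hDd
  · exact h

set_option maxHeartbeats 2000000 in
/-- Necessity part of Propositions 5.1–5.2: if a surface `f` with adapted orthonormal frame
`{e₁, e₂, e₃ = N}` admits a first order transformation with constant coefficients `bᵢ` and
constant orthogonal matrix `(aᵢⱼ)` — i.e. `e*₃ = a₃₁e₁ + a₃₂e₂ + a₃₃e₃` is a unit normal of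
`f* = f + b₁e₁ + b₂e₂ + b₃e₃` — with `p₁₂ = b₁a₃₂ − b₂a₃₁ ≠ 0`, then `f` satisfies the
linear Weingarten relation
`(p₁₂² + p₁₃² + p₂₃²)K + 2(p₁p₁₃ + p₂p₂₃)H + (p₁² + p₂²) = 0`. -/
theorem first_order_transformation_implies_linear_weingarten
    (U : Set (ℝ × ℝ)) (hU : IsOpen U)
    (f : ℝ × ℝ → V3) (hf : ContDiffOn ℝ (⊤ : ℕ∞) f U) (hfi : Immersed f U)
    (e₁ e₂ e₃ : ℝ × ℝ → V3)
    (he₁ : ContDiffOn ℝ (⊤ : ℕ∞) e₁ U) (he₂ : ContDiffOn ℝ (⊤ : ℕ∞) e₂ U) (he₃ : ContDiffOn ℝ (⊤ : ℕ∞) e₃ U)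
    (hadapted : ∀ p ∈ U, e₃ p = normalVec f p)
    (horth : ∀ p ∈ U, dot3 (e₁ p) (e₁ p) = 1 ∧ dot3 (e₂ p) (e₂ p) = 1 ∧
      dot3 (e₃ p) (e₃ p) = 1 ∧ dot3 (e₁ p) (e₂ p) = 0 ∧
      dot3 (e₁ p) (e₃ p) = 0 ∧ dot3 (e₂ p) (e₃ p) = 0)
    (b₁ b₂ b₃ : ℝ) (a : Matrix (Fin 3) (Fin 3) ℝ) (ha : a.transpose * a = 1)
    (p₁ p₂ p₁₂ p₁₃ p₂₃ : ℝ)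
    (hp₁ : p₁ = a 2 0) (hp₂ : p₂ = a 2 1)
    (hp₁₂ : p₁₂ = b₁ * a 2 1 - b₂ * a 2 0)
    (hp₁₃ : p₁₃ = b₁ * a 2 2 - b₃ * a 2 0)
    (hp₂₃ : p₂₃ = b₂ * a 2 2 - b₃ * a 2 1)
    (hp₁₂ne : p₁₂ ≠ 0)
    (fs e3s : ℝ × ℝ → V3)
    (hfs : ∀ p, fs p = f p + b₁ • e₁ p + b₂ • e₂ p + b₃ • e₃ p)
    (he3s : ∀ p, e3s p = a 2 0 • e₁ p + a 2 1 • e₂ p + a 2 2 • e₃ p)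
    (hnormal : ∀ p ∈ U, dot3 (e3s p) (Du fs p) = 0 ∧ dot3 (e3s p) (Dv fs p) = 0) :
    ∀ p ∈ U,
      (p₁₂ ^ 2 + p₁₃ ^ 2 + p₂₃ ^ 2) * GaussK f p +
        2 * (p₁ * p₁₃ + p₂ * p₂₃) * MeanH f p + (p₁ ^ 2 + p₂ ^ 2) = 0 := by

  intro p hp
  subst hp₁ hp₂ hp₁₂ hp₁₃ hp₂₃
  have hmem : U ∈ nhds p := hU.mem_nhds hp
  have hfC : ContDiffAt ℝ (⊤ : ℕ∞) f p := hf.contDiffAt hmem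
  have he1C : ContDiffAt ℝ (⊤ : ℕ∞) e₁ p := he₁.contDiffAt hmem
  have he2C : ContDiffAt ℝ (⊤ : ℕ∞) e₂ p := he₂.contDiffAt hmem
  have he3C : ContDiffAt ℝ (⊤ : ℕ∞) e₃ p := he₃.contDiffAt hmem
  have hfs_fun : fs = fun q => f q + b₁ • e₁ q + b₂ • e₂ q + b₃ • e₃ q := funext hfs
  have he3s_fun : e3s = fun q => a 2 0 • e₁ q + a 2 1 • e₂ q + a 2 2 • e₃ q := funext he3s
  have hfsC : ContDiffAt ℝ (⊤ : ℕ∞) fs p := by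
    rw [hfs_fun]
    exact ((hfC.add (he1C.const_smul b₁)).add (he2C.const_smul b₂)).add (he3C.const_smul b₃)
  have hfd : DifferentiableAt ℝ f p := hfC.differentiableAt (by simp)
  have he1d : DifferentiableAt ℝ e₁ p := he1C.differentiableAt (by simp)
  have he2d : DifferentiableAt ℝ e₂ p := he2C.differentiableAt (by simp)
  have he3d : DifferentiableAt ℝ e₃ p := he3C.differentiableAt (by simp)
  have hfs' : HasFDerivAt fs
      (fderiv ℝ f p + b₁ • fderiv ℝ e₁ p + b₂ • fderiv ℝ e₂ p + b₃ • fderiv ℝ e₃ p) p := by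
    rw [hfs_fun]
    exact ((hfd.hasFDerivAt.add ((he1d.hasFDerivAt).const_smul b₁)).add
      ((he2d.hasFDerivAt).const_smul b₂)).add ((he3d.hasFDerivAt).const_smul b₃)
  have he3s' : HasFDerivAt e3s
      (a 2 0 • fderiv ℝ e₁ p + a 2 1 • fderiv ℝ e₂ p + a 2 2 • fderiv ℝ e₃ p) p := by
    rw [he3s_fun]
    exact (((he1d.hasFDerivAt).const_smul (a 2 0)).add
      ((he2d.hasFDerivAt).const_smul (a 2 1))).add ((he3d.hasFDerivAt).const_smul (a 2 2))
  have he3sd : DifferentiableAt ℝ e3s p := he3s'.differentiableAt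
  have hDufs : Du fs p = Du f p + b₁ • Du e₁ p + b₂ • Du e₂ p + b₃ • Du e₃ p := by
    show fderiv ℝ fs p ((1:ℝ), (0:ℝ)) = _
    rw [hfs'.fderiv]; rfl
  have hDvfs : Dv fs p = Dv f p + b₁ • Dv e₁ p + b₂ • Dv e₂ p + b₃ • Dv e₃ p := by
    show fderiv ℝ fs p ((0:ℝ), (1:ℝ)) = _
    rw [hfs'.fderiv]; rfl
  have hDue3s : Du e3s p = a 2 0 • Du e₁ p + a 2 1 • Du e₂ p + a 2 2 • Du e₃ p := by
    show fderiv ℝ e3s p ((1:ℝ), (0:ℝ)) = _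
    rw [he3s'.fderiv]; rfl
  have hDve3s : Dv e3s p = a 2 0 • Dv e₁ p + a 2 1 • Dv e₂ p + a 2 2 • Dv e₃ p := by
    show fderiv ℝ e3s p ((0:ℝ), (1:ℝ)) = _
    rw [he3s'.fderiv]; rfl
  obtain ⟨o1, o2, o3, o4, o5, o6⟩ := horth p hp
  have hz11 : ∀ q ∈ U, dot3 (e₁ q) (e₁ q) = 1 := fun q hq => (horth q hq).1
  have hz22 : ∀ q ∈ U, dot3 (e₂ q) (e₂ q) = 1 := fun q hq => (horth q hq).2.1
  have hz33 : ∀ q ∈ U, dot3 (e₃ q) (e₃ q) = 1 := fun q hq => (horth q hq).2.2.1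
  have hz12 : ∀ q ∈ U, dot3 (e₁ q) (e₂ q) = 0 := fun q hq => (horth q hq).2.2.2.1
  have hz13 : ∀ q ∈ U, dot3 (e₁ q) (e₃ q) = 0 := fun q hq => (horth q hq).2.2.2.2.1
  have hz23 : ∀ q ∈ U, dot3 (e₂ q) (e₃ q) = 0 := fun q hq => (horth q hq).2.2.2.2.2
  have hw11u : dot3 (Du e₁ p) (e₁ p) + dot3 (e₁ p) (Du e₁ p) = 0 :=
    dot3_const_deriv hU hp he1d.hasFDerivAt he1d.hasFDerivAt hz11 ((1:ℝ), (0:ℝ))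
  have hw11v : dot3 (Dv e₁ p) (e₁ p) + dot3 (e₁ p) (Dv e₁ p) = 0 :=
    dot3_const_deriv hU hp he1d.hasFDerivAt he1d.hasFDerivAt hz11 ((0:ℝ), (1:ℝ))
  have hw22u : dot3 (Du e₂ p) (e₂ p) + dot3 (e₂ p) (Du e₂ p) = 0 :=
    dot3_const_deriv hU hp he2d.hasFDerivAt he2d.hasFDerivAt hz22 ((1:ℝ), (0:ℝ))
  have hw22v : dot3 (Dv e₂ p) (e₂ p) + dot3 (e₂ p) (Dv e₂ p) = 0 :=
    dot3_const_deriv hU hp he2d.hasFDerivAt he2d.hasFDerivAt hz22 ((0:ℝ), (1:ℝ))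
  have hw33u : dot3 (Du e₃ p) (e₃ p) + dot3 (e₃ p) (Du e₃ p) = 0 :=
    dot3_const_deriv hU hp he3d.hasFDerivAt he3d.hasFDerivAt hz33 ((1:ℝ), (0:ℝ))
  have hw33v : dot3 (Dv e₃ p) (e₃ p) + dot3 (e₃ p) (Dv e₃ p) = 0 :=
    dot3_const_deriv hU hp he3d.hasFDerivAt he3d.hasFDerivAt hz33 ((0:ℝ), (1:ℝ))
  have hw12u : dot3 (Du e₁ p) (e₂ p) + dot3 (e₁ p) (Du e₂ p) = 0 :=
    dot3_const_deriv hU hp he1d.hasFDerivAt he2d.hasFDerivAt hz12 ((1:ℝ), (0:ℝ))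
  have hw12v : dot3 (Dv e₁ p) (e₂ p) + dot3 (e₁ p) (Dv e₂ p) = 0 :=
    dot3_const_deriv hU hp he1d.hasFDerivAt he2d.hasFDerivAt hz12 ((0:ℝ), (1:ℝ))
  have hw13u : dot3 (Du e₁ p) (e₃ p) + dot3 (e₁ p) (Du e₃ p) = 0 :=
    dot3_const_deriv hU hp he1d.hasFDerivAt he3d.hasFDerivAt hz13 ((1:ℝ), (0:ℝ))
  have hw13v : dot3 (Dv e₁ p) (e₃ p) + dot3 (e₁ p) (Dv e₃ p) = 0 :=
    dot3_const_deriv hU hp he1d.hasFDerivAt he3d.hasFDerivAt hz13 ((0:ℝ), (1:ℝ))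
  have hw23u : dot3 (Du e₂ p) (e₃ p) + dot3 (e₂ p) (Du e₃ p) = 0 :=
    dot3_const_deriv hU hp he2d.hasFDerivAt he3d.hasFDerivAt hz23 ((1:ℝ), (0:ℝ))
  have hw23v : dot3 (Dv e₂ p) (e₃ p) + dot3 (e₂ p) (Dv e₃ p) = 0 :=
    dot3_const_deriv hU hp he2d.hasFDerivAt he3d.hasFDerivAt hz23 ((0:ℝ), (1:ℝ))
  have m11u : dot3 (e₁ p) (Du e₁ p) = 0 := by
    have h := hw11u
    rw [dot3_comm (Du e₁ p) (e₁ p)] at h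
    linarith
  have r11u : dot3 (Du e₁ p) (e₁ p) = 0 := by
    rw [dot3_comm]; exact m11u
  have m22u : dot3 (e₂ p) (Du e₂ p) = 0 := by
    have h := hw22u
    rw [dot3_comm (Du e₂ p) (e₂ p)] at h
    linarith
  have r22u : dot3 (Du e₂ p) (e₂ p) = 0 := by
    rw [dot3_comm]; exact m22u
  have m33u : dot3 (e₃ p) (Du e₃ p) = 0 := by
    have h := hw33u
    rw [dot3_comm (Du e₃ p) (e₃ p)] at h
    linarith
  have r33u : dot3 (Du e₃ p) (e₃ p) = 0 := by
    rw [dot3_comm]; exact m33u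
  have m12u : dot3 (e₁ p) (Du e₂ p) = -(dot3 (Du e₁ p) (e₂ p)) := by
    linarith [hw12u]
  have m21u : dot3 (e₂ p) (Du e₁ p) = dot3 (Du e₁ p) (e₂ p) := dot3_comm _ _
  have r21u : dot3 (Du e₂ p) (e₁ p) = -(dot3 (Du e₁ p) (e₂ p)) := by
    rw [dot3_comm]; exact m12u
  have m13u : dot3 (e₁ p) (Du e₃ p) = -(dot3 (Du e₁ p) (e₃ p)) := by
    linarith [hw13u]
  have m31u : dot3 (e₃ p) (Du e₁ p) = dot3 (Du e₁ p) (e₃ p) := dot3_comm _ _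
  have r31u : dot3 (Du e₃ p) (e₁ p) = -(dot3 (Du e₁ p) (e₃ p)) := by
    rw [dot3_comm]; exact m13u
  have m23u : dot3 (e₂ p) (Du e₃ p) = -(dot3 (Du e₂ p) (e₃ p)) := by
    linarith [hw23u]
  have m32u : dot3 (e₃ p) (Du e₂ p) = dot3 (Du e₂ p) (e₃ p) := dot3_comm _ _
  have r32u : dot3 (Du e₃ p) (e₂ p) = -(dot3 (Du e₂ p) (e₃ p)) := by
    rw [dot3_comm]; exact m23u
  have mt1u : dot3 (e₁ p) (Du f p) = dot3 (Du f p) (e₁ p) := dot3_comm _ _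
  have mt2u : dot3 (e₂ p) (Du f p) = dot3 (Du f p) (e₂ p) := dot3_comm _ _
  have mt3u : dot3 (e₃ p) (Du f p) = dot3 (Du f p) (e₃ p) := dot3_comm _ _
  have m11v : dot3 (e₁ p) (Dv e₁ p) = 0 := by
    have h := hw11v
    rw [dot3_comm (Dv e₁ p) (e₁ p)] at h
    linarith
  have r11v : dot3 (Dv e₁ p) (e₁ p) = 0 := by
    rw [dot3_comm]; exact m11v
  have m22v : dot3 (e₂ p) (Dv e₂ p) = 0 := by
    have h := hw22v
    rw [dot3_comm (Dv e₂ p) (e₂ p)] at h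
    linarith
  have r22v : dot3 (Dv e₂ p) (e₂ p) = 0 := by
    rw [dot3_comm]; exact m22v
  have m33v : dot3 (e₃ p) (Dv e₃ p) = 0 := by
    have h := hw33v
    rw [dot3_comm (Dv e₃ p) (e₃ p)] at h
    linarith
  have r33v : dot3 (Dv e₃ p) (e₃ p) = 0 := by
    rw [dot3_comm]; exact m33v
  have m12v : dot3 (e₁ p) (Dv e₂ p) = -(dot3 (Dv e₁ p) (e₂ p)) := by
    linarith [hw12v]
  have m21v : dot3 (e₂ p) (Dv e₁ p) = dot3 (Dv e₁ p) (e₂ p) := dot3_comm _ _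
  have r21v : dot3 (Dv e₂ p) (e₁ p) = -(dot3 (Dv e₁ p) (e₂ p)) := by
    rw [dot3_comm]; exact m12v
  have m13v : dot3 (e₁ p) (Dv e₃ p) = -(dot3 (Dv e₁ p) (e₃ p)) := by
    linarith [hw13v]
  have m31v : dot3 (e₃ p) (Dv e₁ p) = dot3 (Dv e₁ p) (e₃ p) := dot3_comm _ _
  have r31v : dot3 (Dv e₃ p) (e₁ p) = -(dot3 (Dv e₁ p) (e₃ p)) := by
    rw [dot3_comm]; exact m13v
  have m23v : dot3 (e₂ p) (Dv e₃ p) = -(dot3 (Dv e₂ p) (e₃ p)) := by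
    linarith [hw23v]
  have m32v : dot3 (e₃ p) (Dv e₂ p) = dot3 (Dv e₂ p) (e₃ p) := dot3_comm _ _
  have r32v : dot3 (Dv e₃ p) (e₂ p) = -(dot3 (Dv e₂ p) (e₃ p)) := by
    rw [dot3_comm]; exact m23v
  have mt1v : dot3 (e₁ p) (Dv f p) = dot3 (Dv f p) (e₁ p) := dot3_comm _ _
  have mt2v : dot3 (e₂ p) (Dv f p) = dot3 (Dv f p) (e₂ p) := dot3_comm _ _
  have mt3v : dot3 (e₃ p) (Dv f p) = dot3 (Dv f p) (e₃ p) := dot3_comm _ _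
  have hfu_e3 : ∀ q ∈ U, dot3 (Du f q) (e₃ q) = 0 := by
    intro q hq
    rw [hadapted q hq]
    exact dot3_normalVec_Du f q
  have hfv_e3 : ∀ q ∈ U, dot3 (Dv f q) (e₃ q) = 0 := by
    intro q hq
    rw [hadapted q hq]
    exact dot3_normalVec_Dv f q
  have ht3u : dot3 (Du f p) (e₃ p) = 0 := hfu_e3 p hp
  have ht3v : dot3 (Dv f p) (e₃ p) = 0 := hfv_e3 p hp
  -- first-order normality equations
  have hxU := (hnormal p hp).1
  rw [he3s p, hDufs] at hxU
  simp only [dot3_add_left, dot3_add_right, dot3_smul_left, dot3_smul_right] at hxU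
  rw [mt1u, mt2u, mt3u, m11u, m12u, m13u, m21u, m22u, m23u, m31u, m32u, m33u, ht3u] at hxU
  have hEqU : a 2 0 * dot3 (Du f p) (e₁ p) + a 2 1 * dot3 (Du f p) (e₂ p) + (b₁ * a 2 1 - b₂ * a 2 0) * dot3 (Du e₁ p) (e₂ p)
      + (b₁ * a 2 2 - b₃ * a 2 0) * dot3 (Du e₁ p) (e₃ p) + (b₂ * a 2 2 - b₃ * a 2 1) * dot3 (Du e₂ p) (e₃ p) = 0 := by
    linear_combination hxU
  have hxV := (hnormal p hp).2
  rw [he3s p, hDvfs] at hxV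
  simp only [dot3_add_left, dot3_add_right, dot3_smul_left, dot3_smul_right] at hxV
  rw [mt1v, mt2v, mt3v, m11v, m12v, m13v, m21v, m22v, m23v, m31v, m32v, m33v, ht3v] at hxV
  have hEqV : a 2 0 * dot3 (Dv f p) (e₁ p) + a 2 1 * dot3 (Dv f p) (e₂ p) + (b₁ * a 2 1 - b₂ * a 2 0) * dot3 (Dv e₁ p) (e₂ p)
      + (b₁ * a 2 2 - b₃ * a 2 0) * dot3 (Dv e₁ p) (e₃ p) + (b₂ * a 2 2 - b₃ * a 2 1) * dot3 (Dv e₂ p) (e₃ p) = 0 := by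
    linear_combination hxV
  -- second derivatives
  have Hduf := hasFDerivAt_Du hfC
  have Hdvf := hasFDerivAt_Dv hfC
  have Hdufs := hasFDerivAt_Du hfsC
  have Hdvfs := hasFDerivAt_Dv hfsC
  have hDuDuf : Du (Du f) p = fderiv ℝ (fderiv ℝ f) p ((1:ℝ), (0:ℝ)) ((1:ℝ), (0:ℝ)) := by
    show fderiv ℝ (Du f) p ((1:ℝ), (0:ℝ)) = _
    rw [Hduf.fderiv]; rfl
  have hDvDuf : Dv (Du f) p = fderiv ℝ (fderiv ℝ f) p ((0:ℝ), (1:ℝ)) ((1:ℝ), (0:ℝ)) := by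
    show fderiv ℝ (Du f) p ((0:ℝ), (1:ℝ)) = _
    rw [Hduf.fderiv]; rfl
  have hDuDvf : Du (Dv f) p = fderiv ℝ (fderiv ℝ f) p ((1:ℝ), (0:ℝ)) ((0:ℝ), (1:ℝ)) := by
    show fderiv ℝ (Dv f) p ((1:ℝ), (0:ℝ)) = _
    rw [Hdvf.fderiv]; rfl
  have hDvDvf : Dv (Dv f) p = fderiv ℝ (fderiv ℝ f) p ((0:ℝ), (1:ℝ)) ((0:ℝ), (1:ℝ)) := by
    show fderiv ℝ (Dv f) p ((0:ℝ), (1:ℝ)) = _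
    rw [Hdvf.fderiv]; rfl
  have hDvDufs : Dv (Du fs) p = fderiv ℝ (fderiv ℝ fs) p ((0:ℝ), (1:ℝ)) ((1:ℝ), (0:ℝ)) := by
    show fderiv ℝ (Du fs) p ((0:ℝ), (1:ℝ)) = _
    rw [Hdufs.fderiv]; rfl
  have hDuDvfs : Du (Dv fs) p = fderiv ℝ (fderiv ℝ fs) p ((1:ℝ), (0:ℝ)) ((0:ℝ), (1:ℝ)) := by
    show fderiv ℝ (Dv fs) p ((1:ℝ), (0:ℝ)) = _
    rw [Hdvfs.fderiv]; rfl
  -- l, m, n and the Codazzi-type symmetry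
  have hA0 := dot3_const_deriv hU hp Hduf he3d.hasFDerivAt hfu_e3 ((1:ℝ), (0:ℝ))
  have hA0' : dot3 (Du (Du f) p) (e₃ p) + dot3 (Du f p) (Du e₃ p) = 0 := by
    rw [hDuDuf]; exact hA0
  have hA := dot3_const_deriv hU hp Hduf he3d.hasFDerivAt hfu_e3 ((0:ℝ), (1:ℝ))
  have hA' : dot3 (Dv (Du f) p) (e₃ p) + dot3 (Du f p) (Dv e₃ p) = 0 := by
    rw [hDvDuf]; exact hA
  have hB := dot3_const_deriv hU hp Hdvf he3d.hasFDerivAt hfv_e3 ((1:ℝ), (0:ℝ))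
  have hB' : dot3 (Du (Dv f) p) (e₃ p) + dot3 (Dv f p) (Du e₃ p) = 0 := by
    rw [hDuDvf]; exact hB
  have hC := dot3_const_deriv hU hp Hdvf he3d.hasFDerivAt hfv_e3 ((0:ℝ), (1:ℝ))
  have hC' : dot3 (Dv (Dv f) p) (e₃ p) + dot3 (Dv f p) (Dv e₃ p) = 0 := by
    rw [hDvDvf]; exact hC
  have hsch_f : Dv (Du f) p = Du (Dv f) p := schwarz hfC
  have hEqMvec : dot3 (Du f p) (Dv e₃ p) = dot3 (Dv f p) (Du e₃ p) := by
    rw [hsch_f] at hA'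
    linarith
  have hEqM : dot3 (Du f p) (e₁ p) * dot3 (Dv e₁ p) (e₃ p) + dot3 (Du f p) (e₂ p) * dot3 (Dv e₂ p) (e₃ p)
      = dot3 (Dv f p) (e₁ p) * dot3 (Du e₁ p) (e₃ p) + dot3 (Dv f p) (e₂ p) * dot3 (Du e₂ p) (e₃ p) := by
    have hx := hEqMvec
    rw [gram3 o1 o2 o3 o4 o5 o6 (Du f p) (Dv e₃ p),
        gram3 o1 o2 o3 o4 o5 o6 (Dv f p) (Du e₃ p),
        r31v, r32v, r33v, r31u, r32u, r33u, ht3u, ht3v] at hx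
    linear_combination -hx
  have hl2 : lcoef f p = dot3 (Du f p) (e₁ p) * dot3 (Du e₁ p) (e₃ p) + dot3 (Du f p) (e₂ p) * dot3 (Du e₂ p) (e₃ p) := by
    have hx : lcoef f p = -(dot3 (Du f p) (Du e₃ p)) := by
      unfold lcoef
      rw [← hadapted p hp]
      linarith [hA0']
    rw [hx, gram3 o1 o2 o3 o4 o5 o6 (Du f p) (Du e₃ p), r31u, r32u, r33u, ht3u]
    ring
  have hm2 : mcoef f p = dot3 (Du f p) (e₁ p) * dot3 (Dv e₁ p) (e₃ p) + dot3 (Du f p) (e₂ p) * dot3 (Dv e₂ p) (e₃ p) := by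
    have hx : mcoef f p = -(dot3 (Du f p) (Dv e₃ p)) := by
      unfold mcoef
      rw [← hadapted p hp]
      linarith [hA']
    rw [hx, gram3 o1 o2 o3 o4 o5 o6 (Du f p) (Dv e₃ p), r31v, r32v, r33v, ht3u]
    ring
  have hn2 : ncoef f p = dot3 (Dv f p) (e₁ p) * dot3 (Dv e₁ p) (e₃ p) + dot3 (Dv f p) (e₂ p) * dot3 (Dv e₂ p) (e₃ p) := by
    have hx : ncoef f p = -(dot3 (Dv f p) (Dv e₃ p)) := by
      unfold ncoef
      rw [← hadapted p hp]
      linarith [hC']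
    rw [hx, gram3 o1 o2 o3 o4 o5 o6 (Dv f p) (Dv e₃ p), r31v, r32v, r33v, ht3v]
    ring
  -- first fundamental form
  have hE2 : dot3 (Du f p) (Du f p) = dot3 (Du f p) (e₁ p) * dot3 (Du f p) (e₁ p) + dot3 (Du f p) (e₂ p) * dot3 (Du f p) (e₂ p) := by
    rw [gram3 o1 o2 o3 o4 o5 o6 (Du f p) (Du f p), ht3u]
    ring
  have hF2 : dot3 (Du f p) (Dv f p) = dot3 (Du f p) (e₁ p) * dot3 (Dv f p) (e₁ p) + dot3 (Du f p) (e₂ p) * dot3 (Dv f p) (e₂ p) := by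
    rw [gram3 o1 o2 o3 o4 o5 o6 (Du f p) (Dv f p), ht3u, ht3v]
    ring
  have hG2 : dot3 (Dv f p) (Dv f p) = dot3 (Dv f p) (e₁ p) * dot3 (Dv f p) (e₁ p) + dot3 (Dv f p) (e₂ p) * dot3 (Dv f p) (e₂ p) := by
    rw [gram3 o1 o2 o3 o4 o5 o6 (Dv f p) (Dv f p), ht3v]
    ring
  -- nondegeneracy
  have hDd : dot3 (Du f p) (e₁ p) * dot3 (Dv f p) (e₂ p) - dot3 (Du f p) (e₂ p) * dot3 (Dv f p) (e₁ p) ≠ 0 := by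
    intro h0
    apply hfi p hp
    apply dot3_self_eq_zero
    rw [lagrange3, hE2, hF2, hG2]
    linear_combination (dot3 (Du f p) (e₁ p) * dot3 (Dv f p) (e₂ p) - dot3 (Du f p) (e₂ p) * dot3 (Dv f p) (e₁ p)) * h0
  -- the EqD equation
  have hzU : ∀ q ∈ U, dot3 (e3s q) (Du fs q) = 0 := fun q hq => (hnormal q hq).1
  have hzV : ∀ q ∈ U, dot3 (e3s q) (Dv fs q) = 0 := fun q hq => (hnormal q hq).2
  have hphi := dot3_const_deriv hU hp he3s'.differentiableAt.hasFDerivAt Hdufs hzU ((0:ℝ), (1:ℝ))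
  have hphi' : dot3 (Dv e3s p) (Du fs p) + dot3 (e3s p) (Dv (Du fs) p) = 0 := by
    rw [hDvDufs]
    exact hphi
  have hpsi := dot3_const_deriv hU hp he3s'.differentiableAt.hasFDerivAt Hdvfs hzV ((1:ℝ), (0:ℝ))
  have hpsi' : dot3 (Du e3s p) (Dv fs p) + dot3 (e3s p) (Du (Dv fs) p) = 0 := by
    rw [hDuDvfs]
    exact hpsi
  have hsch_fs : Dv (Du fs) p = Du (Dv fs) p := schwarz hfsC
  have hvec : dot3 (Dv e3s p) (Du fs p) = dot3 (Du e3s p) (Dv fs p) := by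
    rw [hsch_fs] at hphi'
    linarith
  have hd1u : dot3 (Du e3s p) (e₁ p) = -(a 2 1 * dot3 (Du e₁ p) (e₂ p)) - a 2 2 * dot3 (Du e₁ p) (e₃ p) := by
    rw [hDue3s]
    simp only [dot3_add_left, dot3_smul_left]
    rw [r11u, r21u, r31u]
    ring
  have hd2u : dot3 (Du e3s p) (e₂ p) = a 2 0 * dot3 (Du e₁ p) (e₂ p) - a 2 2 * dot3 (Du e₂ p) (e₃ p) := by
    rw [hDue3s]
    simp only [dot3_add_left, dot3_smul_left]
    rw [r22u, r32u]
    ring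
  have hd3u : dot3 (Du e3s p) (e₃ p) = a 2 0 * dot3 (Du e₁ p) (e₃ p) + a 2 1 * dot3 (Du e₂ p) (e₃ p) := by
    rw [hDue3s]
    simp only [dot3_add_left, dot3_smul_left]
    rw [r33u]
    ring
  have hd1v : dot3 (Dv e3s p) (e₁ p) = -(a 2 1 * dot3 (Dv e₁ p) (e₂ p)) - a 2 2 * dot3 (Dv e₁ p) (e₃ p) := by
    rw [hDve3s]
    simp only [dot3_add_left, dot3_smul_left]
    rw [r11v, r21v, r31v]
    ring
  have hd2v : dot3 (Dv e3s p) (e₂ p) = a 2 0 * dot3 (Dv e₁ p) (e₂ p) - a 2 2 * dot3 (Dv e₂ p) (e₃ p) := by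
    rw [hDve3s]
    simp only [dot3_add_left, dot3_smul_left]
    rw [r22v, r32v]
    ring
  have hd3v : dot3 (Dv e3s p) (e₃ p) = a 2 0 * dot3 (Dv e₁ p) (e₃ p) + a 2 1 * dot3 (Dv e₂ p) (e₃ p) := by
    rw [hDve3s]
    simp only [dot3_add_left, dot3_smul_left]
    rw [r33v]
    ring
  have hc1u : dot3 (Du fs p) (e₁ p) = dot3 (Du f p) (e₁ p) - b₂ * dot3 (Du e₁ p) (e₂ p) - b₃ * dot3 (Du e₁ p) (e₃ p) := by
    rw [hDufs]
    simp only [dot3_add_left, dot3_smul_left]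
    rw [r11u, r21u, r31u]
    ring
  have hc2u : dot3 (Du fs p) (e₂ p) = dot3 (Du f p) (e₂ p) + b₁ * dot3 (Du e₁ p) (e₂ p) - b₃ * dot3 (Du e₂ p) (e₃ p) := by
    rw [hDufs]
    simp only [dot3_add_left, dot3_smul_left]
    rw [r22u, r32u]
    ring
  have hc3u : dot3 (Du fs p) (e₃ p) = b₁ * dot3 (Du e₁ p) (e₃ p) + b₂ * dot3 (Du e₂ p) (e₃ p) := by
    rw [hDufs]
    simp only [dot3_add_left, dot3_smul_left]
    rw [r33u, ht3u]
    ring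
  have hc1v : dot3 (Dv fs p) (e₁ p) = dot3 (Dv f p) (e₁ p) - b₂ * dot3 (Dv e₁ p) (e₂ p) - b₃ * dot3 (Dv e₁ p) (e₃ p) := by
    rw [hDvfs]
    simp only [dot3_add_left, dot3_smul_left]
    rw [r11v, r21v, r31v]
    ring
  have hc2v : dot3 (Dv fs p) (e₂ p) = dot3 (Dv f p) (e₂ p) + b₁ * dot3 (Dv e₁ p) (e₂ p) - b₃ * dot3 (Dv e₂ p) (e₃ p) := by
    rw [hDvfs]
    simp only [dot3_add_left, dot3_smul_left]
    rw [r22v, r32v]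
    ring
  have hc3v : dot3 (Dv fs p) (e₃ p) = b₁ * dot3 (Dv e₁ p) (e₃ p) + b₂ * dot3 (Dv e₂ p) (e₃ p) := by
    rw [hDvfs]
    simp only [dot3_add_left, dot3_smul_left]
    rw [r33v, ht3v]
    ring
  have hEqD : (-(a 2 1 * dot3 (Dv e₁ p) (e₂ p)) - a 2 2 * dot3 (Dv e₁ p) (e₃ p)) * (dot3 (Du f p) (e₁ p) - b₂ * dot3 (Du e₁ p) (e₂ p) - b₃ * dot3 (Du e₁ p) (e₃ p))
      + (a 2 0 * dot3 (Dv e₁ p) (e₂ p) - a 2 2 * dot3 (Dv e₂ p) (e₃ p)) * (dot3 (Du f p) (e₂ p) + b₁ * dot3 (Du e₁ p) (e₂ p) - b₃ * dot3 (Du e₂ p) (e₃ p))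
      + (a 2 0 * dot3 (Dv e₁ p) (e₃ p) + a 2 1 * dot3 (Dv e₂ p) (e₃ p)) * (b₁ * dot3 (Du e₁ p) (e₃ p) + b₂ * dot3 (Du e₂ p) (e₃ p))
      = (-(a 2 1 * dot3 (Du e₁ p) (e₂ p)) - a 2 2 * dot3 (Du e₁ p) (e₃ p)) * (dot3 (Dv f p) (e₁ p) - b₂ * dot3 (Dv e₁ p) (e₂ p) - b₃ * dot3 (Dv e₁ p) (e₃ p))
      + (a 2 0 * dot3 (Du e₁ p) (e₂ p) - a 2 2 * dot3 (Du e₂ p) (e₃ p)) * (dot3 (Dv f p) (e₂ p) + b₁ * dot3 (Dv e₁ p) (e₂ p) - b₃ * dot3 (Dv e₂ p) (e₃ p))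
      + (a 2 0 * dot3 (Du e₁ p) (e₃ p) + a 2 1 * dot3 (Du e₂ p) (e₃ p)) * (b₁ * dot3 (Dv e₁ p) (e₃ p) + b₂ * dot3 (Dv e₂ p) (e₃ p)) := by
    have hx := hvec
    rw [gram3 o1 o2 o3 o4 o5 o6 (Dv e3s p) (Du fs p),
        gram3 o1 o2 o3 o4 o5 o6 (Du e3s p) (Dv fs p),
        hd1v, hd2v, hd3v, hc1u, hc2u, hc3u, hd1u, hd2u, hd3u, hc1v, hc2v, hc3v] at hx
    linear_combination hx
  -- Weingarten coefficients
  set h11 : ℝ := (dot3 (Du e₁ p) (e₃ p) * dot3 (Dv f p) (e₂ p) - dot3 (Dv e₁ p) (e₃ p) * dot3 (Du f p) (e₂ p)) / (dot3 (Du f p) (e₁ p) * dot3 (Dv f p) (e₂ p) - dot3 (Du f p) (e₂ p) * dot3 (Dv f p) (e₁ p)) with hh11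
  set h12 : ℝ := (dot3 (Du f p) (e₁ p) * dot3 (Dv e₁ p) (e₃ p) - dot3 (Dv f p) (e₁ p) * dot3 (Du e₁ p) (e₃ p)) / (dot3 (Du f p) (e₁ p) * dot3 (Dv f p) (e₂ p) - dot3 (Du f p) (e₂ p) * dot3 (Dv f p) (e₁ p)) with hh12
  set h22 : ℝ := (dot3 (Du f p) (e₁ p) * dot3 (Dv e₂ p) (e₃ p) - dot3 (Dv f p) (e₁ p) * dot3 (Du e₂ p) (e₃ p)) / (dot3 (Du f p) (e₁ p) * dot3 (Dv f p) (e₂ p) - dot3 (Du f p) (e₂ p) * dot3 (Dv f p) (e₁ p)) with hh22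
  have hr1 : dot3 (Du e₁ p) (e₃ p) = h11 * dot3 (Du f p) (e₁ p) + h12 * dot3 (Du f p) (e₂ p) := by
    rw [hh11, hh12]
    rw [div_mul_eq_mul_div, div_mul_eq_mul_div, ← add_div, eq_div_iff hDd]
    ring
  have hr2 : dot3 (Dv e₁ p) (e₃ p) = h11 * dot3 (Dv f p) (e₁ p) + h12 * dot3 (Dv f p) (e₂ p) := by
    rw [hh11, hh12]
    rw [div_mul_eq_mul_div, div_mul_eq_mul_div, ← add_div, eq_div_iff hDd]
    ring
  have hr3 : dot3 (Du e₂ p) (e₃ p) = h12 * dot3 (Du f p) (e₁ p) + h22 * dot3 (Du f p) (e₂ p) := by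
    rw [hh12, hh22]
    rw [div_mul_eq_mul_div, div_mul_eq_mul_div, ← add_div, eq_div_iff hDd]
    linear_combination (-(dot3 (Du f p) (e₁ p))) * hEqM
  have hr4 : dot3 (Dv e₂ p) (e₃ p) = h12 * dot3 (Dv f p) (e₁ p) + h22 * dot3 (Dv f p) (e₂ p) := by
    rw [hh12, hh22]
    rw [div_mul_eq_mul_div, div_mul_eq_mul_div, ← add_div, eq_div_iff hDd]
    linear_combination (-(dot3 (Dv f p) (e₁ p))) * hEqM
  have hDen : (dot3 (Du f p) (e₁ p) * dot3 (Du f p) (e₁ p) + dot3 (Du f p) (e₂ p) * dot3 (Du f p) (e₂ p)) * (dot3 (Dv f p) (e₁ p) * dot3 (Dv f p) (e₁ p) + dot3 (Dv f p) (e₂ p) * dot3 (Dv f p) (e₂ p))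
      - (dot3 (Du f p) (e₁ p) * dot3 (Dv f p) (e₁ p) + dot3 (Du f p) (e₂ p) * dot3 (Dv f p) (e₂ p)) ^ 2 ≠ 0 := by
    have hq : (dot3 (Du f p) (e₁ p) * dot3 (Du f p) (e₁ p) + dot3 (Du f p) (e₂ p) * dot3 (Du f p) (e₂ p)) * (dot3 (Dv f p) (e₁ p) * dot3 (Dv f p) (e₁ p) + dot3 (Dv f p) (e₂ p) * dot3 (Dv f p) (e₂ p))
        - (dot3 (Du f p) (e₁ p) * dot3 (Dv f p) (e₁ p) + dot3 (Du f p) (e₂ p) * dot3 (Dv f p) (e₂ p)) ^ 2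
        = (dot3 (Du f p) (e₁ p) * dot3 (Dv f p) (e₂ p) - dot3 (Du f p) (e₂ p) * dot3 (Dv f p) (e₁ p)) ^ 2 := by ring
    rw [hq]
    exact pow_ne_zero 2 hDd
  have hK : GaussK f p = h11 * h22 - h12 ^ 2 := by
    unfold GaussK Ecoef Fcoef Gcoef
    rw [hl2, hm2, hn2, hE2, hF2, hG2, div_eq_iff hDen, hr1, hr2, hr3, hr4]
    ring
  have hH : MeanH f p = (h11 + h22) / 2 := by
    unfold MeanH Ecoef Fcoef Gcoef
    rw [hl2, hm2, hn2, hE2, hF2, hG2, div_eq_div_iff (by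
      intro h0
      apply hDen
      linarith) (two_ne_zero), hr1, hr2, hr3, hr4]
    ring
  have key := keyalg (a 2 0) (a 2 1) (a 2 2) b₁ b₂ b₃
    (dot3 (Du f p) (e₁ p)) (dot3 (Du f p) (e₂ p)) (dot3 (Dv f p) (e₁ p)) (dot3 (Dv f p) (e₂ p)) (dot3 (Du e₁ p) (e₂ p)) (dot3 (Dv e₁ p) (e₂ p))
    (dot3 (Du e₁ p) (e₃ p)) (dot3 (Du e₂ p) (e₃ p)) (dot3 (Dv e₁ p) (e₃ p)) (dot3 (Dv e₂ p) (e₃ p)) h11 h12 h22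
    (b₁ * a 2 1 - b₂ * a 2 0) (b₁ * a 2 2 - b₃ * a 2 0) (b₂ * a 2 2 - b₃ * a 2 1)
    rfl rfl rfl hDd hr1 hr2 hr3 hr4 hEqU hEqV hEqD
  rw [hK, hH]
  linear_combination key
end
end

section
/- Let f : U → ℝ³ be a smooth isothermic immersion with conformal factor E, unit normal N, second fundamental form coefficients l = f_uu·N, m = f_uv·N = 0, n = f_vv·N, and principal curvatures k₁ = l/E, k₂ = n/E. Let f* be its dual (f*_u = f_u/E, f*_v = −f_v/E) with unit normal N* = −N. Then the second fundamental form coefficients of f* are l* = f*_uu·N* = −l/E, m* = f*_uv·N* = 0, n* = f*_vv·N* = n/E, so that the second fundamental form of f* is E⁻¹(−l du² + n dv²), and the principal curvatures of f* are k*₁ = −l = −E k₁ and k*₂ = n = E k₂. -/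
noncomputable section

open Real

/- Auxiliary lemmas -/

lemma dot3_add_left' (a b c : V3) : dot3 (a + b) c = dot3 a c + dot3 b c := by
  simp [dot3]; ring
lemma dot3_smul_left' (s : ℝ) (a c : V3) : dot3 (s • a) c = s * dot3 a c := by
  simp [dot3]; ring
lemma dot3_neg_left' (a c : V3) : dot3 (-a) c = -dot3 a c := by
  simp [dot3]; ring
lemma dot3_neg_right' (a c : V3) : dot3 a (-c) = -dot3 a c := by
  simp [dot3]; ring
lemma dot3_smul_right' (s : ℝ) (a c : V3) : dot3 a (s • c) = s * dot3 a c := by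
  simp [dot3]; ring
lemma dot3_cross_left' (a b : V3) : dot3 a (cross3 a b) = 0 := by
  simp [dot3, cross3]; ring
lemma dot3_cross_right' (a b : V3) : dot3 b (cross3 a b) = 0 := by
  simp [dot3, cross3]; ring

lemma Du_contDiffAt' (f : ℝ × ℝ → V3) (U : Set (ℝ × ℝ)) (hU : IsOpen U)
    (hf : ContDiffOn ℝ (⊤ : ℕ∞) f U) (p : ℝ × ℝ) (hp : p ∈ U) (w : ℝ × ℝ) :
    ContDiffAt ℝ (⊤ : ℕ∞) (fun q => fderiv ℝ f q w) p := by
  have h := (hf.contDiffAt (hU.mem_nhds hp)).fderiv_right (m := (⊤ : ℕ∞)) (by simp)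
  exact h.clm_apply contDiffAt_const

lemma dot3_differentiableAt' (g h : ℝ × ℝ → V3) (p : ℝ × ℝ)
    (hg : DifferentiableAt ℝ g p) (hh : DifferentiableAt ℝ h p) :
    DifferentiableAt ℝ (fun q => dot3 (g q) (h q)) p := by
  have hgi := differentiableAt_pi.mp hg
  have hhi := differentiableAt_pi.mp hh
  unfold dot3
  exact (((hgi 0).mul (hhi 0)).add ((hgi 1).mul (hhi 1))).add ((hgi 2).mul (hhi 2))

lemma smul_fderiv_apply' (a : ℝ × ℝ → ℝ) (g : ℝ × ℝ → V3) (p w : ℝ × ℝ)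
    (ha : DifferentiableAt ℝ a p) (hg : DifferentiableAt ℝ g p) :
    fderiv ℝ (fun q => a q • g q) p w
      = (fderiv ℝ a p w) • g p + a p • fderiv ℝ g p w := by
  rw [fderiv_fun_smul ha hg]
  simp [add_comm]

/-- Second fundamental form and principal curvatures of the dual of an isothermic immersion:
with `N* = −N`, one has `l* = −l/E`, `m* = 0`, `n* = n/E`, so the second fundamental form of
`f*` is `E⁻¹(−l du² + n dv²)`, and the principal curvatures of `f*` are `k*₁ = −l = −E k₁`
and `k*₂ = n = E k₂`. -/
theorem christoffel_dual_second_form_and_principal_curvatures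
    (U : Set (ℝ × ℝ)) (hU : IsOpen U)
    (f : ℝ × ℝ → V3) (hf : ContDiffOn ℝ (⊤ : ℕ∞) f U) (hfi : Immersed f U)
    (E : ℝ × ℝ → ℝ)
    (hconf : ∀ p ∈ U, dot3 (Du f p) (Dv f p) = 0 ∧
      dot3 (Du f p) (Du f p) = E p ∧ dot3 (Dv f p) (Dv f p) = E p ∧ 0 < E p)
    (hiso : ∀ p ∈ U, mcoef f p = 0)
    (fs : ℝ × ℝ → V3)
    (hdual : ∀ p ∈ U, Du fs p = (E p)⁻¹ • Du f p ∧ Dv fs p = -((E p)⁻¹ • Dv f p)) :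
    ∀ p ∈ U,
      -- second fundamental form coefficients of the dual, w.r.t. its normal N* = −N
      dot3 (Du (Du fs) p) (-normalVec f p) = -(lcoef f p / E p) ∧
      dot3 (Dv (Du fs) p) (-normalVec f p) = 0 ∧
      dot3 (Dv (Dv fs) p) (-normalVec f p) = ncoef f p / E p ∧
      -- principal curvatures of the dual (second form over first form, coefficientwise)
      dot3 (Du (Du fs) p) (-normalVec f p) / (E p)⁻¹ = -lcoef f p ∧
      dot3 (Du (Du fs) p) (-normalVec f p) / (E p)⁻¹ = -(E p * (lcoef f p / E p)) ∧
      dot3 (Dv (Dv fs) p) (-normalVec f p) / (E p)⁻¹ = ncoef f p ∧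
      dot3 (Dv (Dv fs) p) (-normalVec f p) / (E p)⁻¹ = E p * (ncoef f p / E p) := by
  intro p hp
  obtain ⟨hF, hEu, hEv, hE⟩ := hconf p hp
  have hEne : E p ≠ 0 := hE.ne'
  -- orthogonality of the normal
  have hNu : dot3 (Du f p) (normalVec f p) = 0 := by
    unfold normalVec; rw [dot3_smul_right', dot3_cross_left', mul_zero]
  have hNv : dot3 (Dv f p) (normalVec f p) = 0 := by
    unfold normalVec; rw [dot3_smul_right', dot3_cross_right', mul_zero]
  -- differentiability
  have hDu : DifferentiableAt ℝ (Du f) p :=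
    (Du_contDiffAt' f U hU hf p hp (1, 0)).differentiableAt (by simp)
  have hDv : DifferentiableAt ℝ (Dv f) p :=
    (Du_contDiffAt' f U hU hf p hp (0, 1)).differentiableAt (by simp)
  set a : ℝ × ℝ → ℝ := fun q => (dot3 (Du f q) (Du f q))⁻¹ with ha_def
  have haD : DifferentiableAt ℝ a p := by
    apply DifferentiableAt.inv (dot3_differentiableAt' _ _ p hDu hDu)
    rw [hEu]; exact hEne
  have hap : a p = (E p)⁻¹ := by rw [ha_def]; simp [hEu]
  have hmem : U ∈ nhds p := hU.mem_nhds hp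
  -- eventual equality of Du fs, Dv fs with globally-defined formulas
  have hev1 : Du fs =ᶠ[nhds p] fun q => a q • Du f q := by
    filter_upwards [hmem] with q hq
    rw [(hdual q hq).1, ha_def]
    simp [(hconf q hq).2.1]
  have hev2 : Dv fs =ᶠ[nhds p] fun q => -(a q • Dv f q) := by
    filter_upwards [hmem] with q hq
    rw [(hdual q hq).2, ha_def]
    simp [(hconf q hq).2.1]
  have hDDu : ∀ w, fderiv ℝ (Du fs) p w
      = (fderiv ℝ a p w) • Du f p + (E p)⁻¹ • fderiv ℝ (Du f) p w := by
    intro w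
    rw [hev1.fderiv_eq, smul_fderiv_apply' a (Du f) p w haD hDu, hap]
  have hDDv : ∀ w, fderiv ℝ (Dv fs) p w
      = -((fderiv ℝ a p w) • Dv f p + (E p)⁻¹ • fderiv ℝ (Dv f) p w) := by
    intro w
    rw [hev2.fderiv_eq, fderiv_fun_neg, ContinuousLinearMap.neg_apply,
      smul_fderiv_apply' a (Dv f) p w haD hDv, hap]
  -- the three second-form coefficients
  have h1 : dot3 (Du (Du fs) p) (normalVec f p) = (E p)⁻¹ * lcoef f p := by
    show dot3 (fderiv ℝ (Du fs) p (1, 0)) (normalVec f p) = _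
    rw [hDDu (1, 0), dot3_add_left', dot3_smul_left', dot3_smul_left', hNu]
    unfold lcoef
    ring_nf
    rfl
  have h2 : dot3 (Dv (Du fs) p) (normalVec f p) = 0 := by
    show dot3 (fderiv ℝ (Du fs) p (0, 1)) (normalVec f p) = 0
    rw [hDDu (0, 1), dot3_add_left', dot3_smul_left', dot3_smul_left', hNu]
    have : dot3 (fderiv ℝ (Du f) p (0, 1)) (normalVec f p) = mcoef f p := rfl
    rw [this, hiso p hp]
    ring
  have h3 : dot3 (Dv (Dv fs) p) (normalVec f p) = -((E p)⁻¹ * ncoef f p) := by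
    show dot3 (fderiv ℝ (Dv fs) p (0, 1)) (normalVec f p) = _
    rw [hDDv (0, 1), dot3_neg_left', dot3_add_left', dot3_smul_left', dot3_smul_left', hNv]
    have : dot3 (fderiv ℝ (Dv f) p (0, 1)) (normalVec f p) = ncoef f p := rfl
    rw [this]
    ring
  have e1 : dot3 (Du (Du fs) p) (-normalVec f p) = -(lcoef f p / E p) := by
    rw [dot3_neg_right', h1]; field_simp
  have e2 : dot3 (Dv (Du fs) p) (-normalVec f p) = 0 := by
    rw [dot3_neg_right', h2]; ring
  have e3 : dot3 (Dv (Dv fs) p) (-normalVec f p) = ncoef f p / E p := by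
    rw [dot3_neg_right', h3]; field_simp
  refine ⟨e1, e2, e3, ?_, ?_, ?_, ?_⟩
  · rw [e1]; field_simp
  · rw [e1]; field_simp
  · rw [e3]; field_simp
  · rw [e3]; field_simp
end
end
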